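/- arXiv:2505.13052 — 4 statements merged into one kernel-verified Lean document; each statement's English description precedes it below -/
import Mathlib

section
/- Let π₁, π₂ > 0, π₊ = π₁ + π₂, and let b₁, b₂, b₀, c₁, c₂, c₀ be elements of normed spaces, and r̄ ≥ 2. Then π₁|b₁ − b₀|^{r̄} + π₂|b₂ − b₀|^{r̄} + π₁‖c₁ − c₀‖^{r̄} + π₂‖c₂ − c₀‖^{r̄} ≥ C·π₊·(π₁π₂/π₊²)^{r̄/2}·|b₁ − b₂|^{r̄/2}·‖c₁ − c₂‖^{r̄/2} for some constant C > 0 depending only on r̄. -/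
/-!
Each pair of displacements controls the distance it spans: by the triangle inequality one of
`‖b₁ - b₀‖`, `‖b₂ - b₀‖` is at least `‖b₁ - b₂‖ / 2`, so the `b`-terms are at least
`min π₁ π₂ · (‖b₁ - b₂‖ / 2) ^ r̄`, and likewise for `c`. AM-GM turns `u ^ r̄ + v ^ r̄` into
`2 (u v) ^ (r̄ / 2)`, and since `t = π₁ π₂ / π₊² ≤ 1` and `r̄ / 2 ≥ 1`, the weight satisfies
`π₊ t ^ (r̄ / 2) ≤ π₊ t = π₁ π₂ / π₊ ≤ min π₁ π₂`. This gives the claim with `C = 2 / 2 ^ r̄`.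
-/

open Real

lemma min_mul_div_two_rpow_le_of_le_add {r π₁ π₂ u A B : ℝ} (hr : 0 ≤ r) (hπ₁ : 0 ≤ π₁)
    (hπ₂ : 0 ≤ π₂) (hu : 0 ≤ u) (hA : 0 ≤ A) (hB : 0 ≤ B) (h : u ≤ A + B) :
    min π₁ π₂ * (u / 2) ^ r ≤ π₁ * A ^ r + π₂ * B ^ r := by
  rcases le_total A B with hAB | hAB
  · have hB' : (u / 2) ^ r ≤ B ^ r := rpow_le_rpow (by positivity) (by linarith) hr
    have : min π₁ π₂ * (u / 2) ^ r ≤ π₂ * B ^ r :=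
      mul_le_mul (min_le_right _ _) hB' (by positivity) hπ₂
    nlinarith [rpow_nonneg hA r]
  · have hA' : (u / 2) ^ r ≤ A ^ r := rpow_le_rpow (by positivity) (by linarith) hr
    have : min π₁ π₂ * (u / 2) ^ r ≤ π₁ * A ^ r :=
      mul_le_mul (min_le_left _ _) hA' (by positivity) hπ₁
    nlinarith [rpow_nonneg hB r]

lemma min_mul_norm_sub_div_two_rpow_le {E : Type*} [SeminormedAddGroup E] {r π₁ π₂ : ℝ}
    (hr : 0 ≤ r) (hπ₁ : 0 ≤ π₁) (hπ₂ : 0 ≤ π₂) (x y z : E) :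
    min π₁ π₂ * (‖x - y‖ / 2) ^ r ≤ π₁ * ‖x - z‖ ^ r + π₂ * ‖y - z‖ ^ r := by
  refine min_mul_div_two_rpow_le_of_le_add hr hπ₁ hπ₂ (norm_nonneg _) (norm_nonneg _)
    (norm_nonneg _) ?_
  simpa only [norm_sub_rev z y] using norm_sub_le_norm_sub_add_norm_sub x z y

lemma two_mul_rpow_half_mul_rpow_half_le {u v : ℝ} (hu : 0 ≤ u) (hv : 0 ≤ v) (r : ℝ) :
    2 * (u ^ (r / 2) * v ^ (r / 2)) ≤ u ^ r + v ^ r := by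
  have hsq : ∀ w : ℝ, 0 ≤ w → w ^ r = (w ^ (r / 2)) ^ 2 := fun w hw => by
    rw [← rpow_two, ← rpow_mul hw, div_mul_cancel₀ r two_ne_zero]
  rw [hsq u hu, hsq v hv, ← mul_assoc]
  exact two_mul_le_add_sq _ _

lemma mul_div_add_le_min {π₁ π₂ : ℝ} (hπ₁ : 0 < π₁) (hπ₂ : 0 < π₂) :
    π₁ * π₂ / (π₁ + π₂) ≤ min π₁ π₂ := by
  rw [div_le_iff₀ (by positivity)]
  rcases le_total π₁ π₂ with h | h
  · rw [min_eq_left h]; nlinarith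
  · rw [min_eq_right h]; nlinarith

lemma add_mul_rpow_half_le_min {π₁ π₂ r : ℝ} (hπ₁ : 0 < π₁) (hπ₂ : 0 < π₂) (hr : 2 ≤ r) :
    (π₁ + π₂) * (π₁ * π₂ / (π₁ + π₂) ^ 2) ^ (r / 2) ≤ min π₁ π₂ := by
  have hs : 0 < π₁ + π₂ := by positivity
  have ht1 : π₁ * π₂ / (π₁ + π₂) ^ 2 ≤ 1 := by
    rw [div_le_one (by positivity)]
    nlinarith
  have hpow : (π₁ * π₂ / (π₁ + π₂) ^ 2) ^ (r / 2) ≤ π₁ * π₂ / (π₁ + π₂) ^ 2 := by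
    simpa only [rpow_one] using
      rpow_le_rpow_of_exponent_ge (by positivity) ht1 (by linarith : (1 : ℝ) ≤ r / 2)
  calc (π₁ + π₂) * (π₁ * π₂ / (π₁ + π₂) ^ 2) ^ (r / 2)
      ≤ (π₁ + π₂) * (π₁ * π₂ / (π₁ + π₂) ^ 2) := mul_le_mul_of_nonneg_left hpow hs.le
    _ = π₁ * π₂ / (π₁ + π₂) := by field_simp
    _ ≤ min π₁ π₂ := mul_div_add_le_min hπ₁ hπ₂

/-- Mixed cross-term inequality used to control the merged regression-slope
parameter in the atom-merging algorithm for GGMoE models. -/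
theorem merged_mixed_cross_term_ineq {E F : Type*} [NormedAddCommGroup E] [NormedAddCommGroup F]
    (rbar : ℝ) (hr : 2 ≤ rbar) :
    ∃ C > (0 : ℝ), ∀ (π₁ π₂ : ℝ) (b₁ b₂ b₀ : E) (c₁ c₂ c₀ : F), 0 < π₁ → 0 < π₂ →
      C * (π₁ + π₂) * (π₁ * π₂ / (π₁ + π₂) ^ 2) ^ (rbar / 2) *
          (‖b₁ - b₂‖ ^ (rbar / 2) * ‖c₁ - c₂‖ ^ (rbar / 2)) ≤
        π₁ * ‖b₁ - b₀‖ ^ rbar + π₂ * ‖b₂ - b₀‖ ^ rbar +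
          π₁ * ‖c₁ - c₀‖ ^ rbar + π₂ * ‖c₂ - c₀‖ ^ rbar := by
  have hr0 : 0 ≤ rbar := by linarith
  refine ⟨2 / 2 ^ rbar, by positivity, fun π₁ π₂ b₁ b₂ b₀ c₁ c₂ c₀ hπ₁ hπ₂ => ?_⟩
  set u := ‖b₁ - b₂‖
  set v := ‖c₁ - c₂‖
  have hb := min_mul_norm_sub_div_two_rpow_le hr0 hπ₁.le hπ₂.le b₁ b₂ b₀
  have hc := min_mul_norm_sub_div_two_rpow_le hr0 hπ₁.le hπ₂.le c₁ c₂ c₀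
  have hweight := add_mul_rpow_half_le_min hπ₁ hπ₂ hr
  have hamgm := two_mul_rpow_half_mul_rpow_half_le (norm_nonneg (b₁ - b₂))
    (norm_nonneg (c₁ - c₂)) rbar
  have h2r : 0 < (2 : ℝ) ^ rbar := by positivity
  calc 2 / 2 ^ rbar * (π₁ + π₂) * (π₁ * π₂ / (π₁ + π₂) ^ 2) ^ (rbar / 2) *
        (u ^ (rbar / 2) * v ^ (rbar / 2))
      = (π₁ + π₂) * (π₁ * π₂ / (π₁ + π₂) ^ 2) ^ (rbar / 2) / 2 ^ rbar *
        (2 * (u ^ (rbar / 2) * v ^ (rbar / 2))) := by ring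
    _ ≤ min π₁ π₂ / 2 ^ rbar * (u ^ rbar + v ^ rbar) := by gcongr
    _ = min π₁ π₂ * (u / 2) ^ rbar + min π₁ π₂ * (v / 2) ^ rbar := by
        rw [div_rpow (norm_nonneg _) zero_le_two, div_rpow (norm_nonneg _) zero_le_two]
        ring
    _ ≤ _ := by linarith
end

section
/- The system of polynomial equations Σ_{m=1}^{M} Σ_{α₄+2α₅=ℓ} p_m² q₁ₘ^{α₄} q₂ₘ^{α₅} / (α₄! α₅!) = 0 for all ℓ ∈ {1,2,3,4} has no non-trivial solution when M = 2, where a solution (p_m, q₁ₘ, q₂ₘ)_{m=1}^{2} is non-trivial if all p_m ≠ 0 and at least one q₁ₘ ≠ 0. -/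
set_option maxHeartbeats 1000000 in
/-- The system of polynomial equations
`∑_{m=1}^{2} ∑_{α₄+2α₅=ℓ} p_m² q₁ₘ^{α₄} q₂ₘ^{α₅}/(α₄!α₅!) = 0` for all
`ℓ ∈ {1,2,3,4}` has no non-trivial solution (all `p_m ≠ 0` and some `q₁ₘ ≠ 0`). -/
theorem no_nontrivial_solution_M2_R4 (p q₁ q₂ : Fin 2 → ℝ)
    (heq : ∀ ℓ ∈ Finset.Icc 1 4,
      ∑ m, ∑ α ∈ (Finset.range (ℓ + 1) ×ˢ Finset.range (ℓ + 1)).filter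
          (fun α => α.1 + 2 * α.2 = ℓ),
        p m ^ 2 * q₁ m ^ α.1 * q₂ m ^ α.2 /
          ((α.1.factorial : ℝ) * (α.2.factorial : ℝ)) = 0) :
    ¬ ((∀ m, p m ≠ 0) ∧ ∃ m, q₁ m ≠ 0) := by
  rintro ⟨hp, m, hm⟩
  have E1 := heq 1 (by decide)
  have E2 := heq 2 (by decide)
  have E3 := heq 3 (by decide)
  have E4 := heq 4 (by decide)
  norm_num [Finset.sum_filter, Finset.sum_product, Finset.sum_range_succ,
    Fin.sum_univ_two, Nat.factorial] at E1 E2 E3 E4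
  set a := p 0 ^ 2 with ha_def
  set b := p 1 ^ 2 with hb_def
  set x := q₁ 0 with hx_def
  set y := q₁ 1 with hy_def
  set u := q₂ 0 with hu_def
  set v := q₂ 1 with hv_def
  have ha : 0 < a := pow_two_pos_of_ne_zero (hp 0)
  have hb : 0 < b := pow_two_pos_of_ne_zero (hp 1)
  -- both x and y are nonzero
  have hxy0 : x ≠ 0 ∧ y ≠ 0 := by
    constructor
    · intro h0
      have hy0 : y = 0 := by
        have : b * y = 0 := by linear_combination E1 - a * h0 - x * h0 * 0
        rcases mul_eq_zero.mp this with h | h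
        · exact absurd h hb.ne'
        · exact h
      fin_cases m
      · exact hm h0
      · exact hm hy0
    · intro h0
      have hx0 : x = 0 := by
        have : a * x = 0 := by linear_combination E1 - b * h0
        rcases mul_eq_zero.mp this with h | h
        · exact absurd h ha.ne'
        · exact h
      fin_cases m
      · exact hm hx0
      · exact hm h0
  obtain ⟨hx, hy⟩ := hxy0
  -- x ≠ y
  have hxney : x ≠ y := by
    intro h
    have : (a + b) * x = 0 := by linear_combination E1 + b * h
    rcases mul_eq_zero.mp this with h' | h'
    · linarith
    · exact hx h'
  -- equation A : x² + 6u = y² + 6v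
  have hA0 : a * x * (x ^ 2 + 6 * u - (y ^ 2 + 6 * v)) = 0 := by
    linear_combination 6 * E3 - (y ^ 2 + 6 * v) * E1
  have hA : x ^ 2 + 6 * u = y ^ 2 + 6 * v := by
    rcases mul_eq_zero.mp hA0 with h | h
    · exact absurd h (mul_ne_zero ha.ne' hx)
    · linarith
  -- equation B
  have hB0 : a * (x ^ 2 * y + 2 * u * y - x * y ^ 2 - 2 * x * v) = 0 := by
    linear_combination 2 * y * E2 - (y ^ 2 + 2 * v) * E1
  have hB : x ^ 2 * y + 2 * u * y - x * y ^ 2 - 2 * x * v = 0 := by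
    rcases mul_eq_zero.mp hB0 with h | h
    · exact absurd h ha.ne'
    · exact h
  -- explicit values of u and v
  have hv0 : (y - x) * (6 * v - 2 * x * y + y ^ 2) = 0 := by
    linear_combination 3 * hB - y * hA
  have hv : 6 * v = 2 * x * y - y ^ 2 := by
    rcases mul_eq_zero.mp hv0 with h | h
    · exact absurd (by linarith : x = y) hxney
    · linarith
  have hu : 6 * u = 2 * x * y - x ^ 2 := by linarith
  -- equation from ℓ = 4
  have hE0 : a * (y * (x ^ 4 + 12 * x ^ 2 * u + 12 * u ^ 2)
      - x * (y ^ 4 + 12 * y ^ 2 * v + 12 * v ^ 2)) = 0 := by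
    linear_combination 24 * y * E4 - (y ^ 4 + 12 * y ^ 2 * v + 12 * v ^ 2) * E1
  have hE : y * (x ^ 4 + 12 * x ^ 2 * u + 12 * u ^ 2)
      - x * (y ^ 4 + 12 * y ^ 2 * v + 12 * v ^ 2) = 0 := by
    rcases mul_eq_zero.mp hE0 with h | h
    · exact absurd h ha.ne'
    · exact h
  -- final factorisation
  have hT : x * y * (x - y) * (x ^ 2 - x * y + y ^ 2) = 0 := by
    linear_combination (-(3:ℝ)/2) * hE
      + (y * (3 * x ^ 2 + (6 * u + 2 * x * y - x ^ 2) / 2)) * hu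
      - (x * (3 * y ^ 2 + (6 * v + 2 * x * y - y ^ 2) / 2)) * hv
  have hy2 : 0 < y ^ 2 := pow_two_pos_of_ne_zero hy
  have hpos : 0 < x ^ 2 - x * y + y ^ 2 := by nlinarith [sq_nonneg (2 * x - y)]
  have := mul_ne_zero (mul_ne_zero (mul_ne_zero hx hy) (sub_ne_zero.mpr hxney)) hpos.ne'
  exact this hT
end

section
/- The system of polynomial equations Σ_{m=1}^{2} Σ_{α₄+2α₅=ℓ} p_m² q₁ₘ^{α₄} q₂ₘ^{α₅} / (α₄! α₅!) = 0 for all ℓ ∈ {1,2,3} admits a non-trivial solution, where non-trivial means all p_m ≠ 0 and at least one q₁ₘ ≠ 0. -/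
/-- The system truncated at degree `R = 3` with two components admits a
non-trivial solution. -/
theorem exists_nontrivial_solution_M2_R3 :
    ∃ p q₁ q₂ : Fin 2 → ℝ,
      (∀ m, p m ≠ 0) ∧ (∃ m, q₁ m ≠ 0) ∧
      ∀ ℓ ∈ Finset.Icc 1 3,
        ∑ m, ∑ α ∈ (Finset.range (ℓ + 1) ×ˢ Finset.range (ℓ + 1)).filter
            (fun α => α.1 + 2 * α.2 = ℓ),
          p m ^ 2 * q₁ m ^ α.1 * q₂ m ^ α.2 /
            ((α.1.factorial : ℝ) * (α.2.factorial : ℝ)) = 0 := by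
  refine ⟨![1, 1], ![1, -1], ![-1/2, -1/2], ?_, ⟨0, by norm_num⟩, ?_⟩
  · intro m; fin_cases m <;> norm_num
  · intro ℓ hℓ
    rw [Finset.mem_Icc] at hℓ
    obtain ⟨h1, h3⟩ := hℓ
    interval_cases ℓ <;>
      simp [Fin.sum_univ_two, Finset.sum_filter, Finset.sum_product, Finset.sum_range_succ,
        Nat.factorial] <;> norm_num
end

section
/- For every M ≥ 2, r̄(M) = r(M), where r(M) is the smallest R such that the system Σ_{m=1}^{M} Σ_{α₄+2α₅=ℓ} p_m² q₄ₘ^{α₄} q₅ₘ^{α₅}/(α₄!α₅!) = 0 for all ℓ ∈ [R] has no non-trivial solution, and r̄(M) is the smallest R such that the larger system Σ_{m=1}^{M} Σ_{α∈𝒥_{ℓ₁,ℓ₂}} p_m² q₁ₘ^{α₁} q₂ₘ^{α₂} q₃ₘ^{α₃} q₄ₘ^{α₄} q₅ₘ^{α₅}/(α₁!α₂!α₃!α₄!α₅!) = 0 for all ℓ₁, ℓ₂ ≥ 0 with 1 ≤ ℓ₁+ℓ₂ ≤ R has no non-trivial solution. -/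
/-- The small system up to degree `R` has a non-trivial solution. -/
def SmallSysSolvable (M R : ℕ) : Prop :=
  ∃ p q₄ q₅ : Fin M → ℝ,
    (∀ m, p m ≠ 0) ∧ (∃ m, q₄ m ≠ 0) ∧
    ∀ ℓ ∈ Finset.Icc 1 R,
      ∑ m, ∑ α ∈ (Finset.range (ℓ + 1) ×ˢ Finset.range (ℓ + 1)).filter
          (fun α => α.1 + 2 * α.2 = ℓ),
        p m ^ 2 * q₄ m ^ α.1 * q₅ m ^ α.2 /
          ((α.1.factorial : ℝ) * (α.2.factorial : ℝ)) = 0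

/-- The large system (over `𝒥_{ℓ₁,ℓ₂}`) up to total degree `R` has a
non-trivial solution. -/
def BigSysSolvable (M R : ℕ) : Prop :=
  ∃ p q₁ q₂ q₃ q₄ q₅ : Fin M → ℝ,
    (∀ m, p m ≠ 0) ∧ (∃ m, q₄ m ≠ 0) ∧
    ∀ ℓ₁ ℓ₂ : ℕ, 1 ≤ ℓ₁ + ℓ₂ → ℓ₁ + ℓ₂ ≤ R →
      ∑ m, ∑ α ∈ ((Finset.range (ℓ₁ + 1) ×ˢ Finset.range (ℓ₁ + 1) ×ˢ
            Finset.range (ℓ₁ + 1) ×ˢ Finset.range (ℓ₂ + 1) ×ˢ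
            Finset.range (ℓ₂ + 1)).filter
          (fun α => α.1 + 2 * α.2.1 + α.2.2.1 = ℓ₁ ∧
            α.2.2.1 + α.2.2.2.1 + 2 * α.2.2.2.2 = ℓ₂)),
        p m ^ 2 * q₁ m ^ α.1 * q₂ m ^ α.2.1 * q₃ m ^ α.2.2.1 *
            q₄ m ^ α.2.2.2.1 * q₅ m ^ α.2.2.2.2 /
          ((α.1.factorial : ℝ) * (α.2.1.factorial : ℝ) * (α.2.2.1.factorial : ℝ) *
            (α.2.2.2.1.factorial : ℝ) * (α.2.2.2.2.factorial : ℝ)) = 0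

lemma big_zero_sum (ℓ : ℕ) (p q₁ q₂ q₃ q₄ q₅ : ℝ) :
    ∑ α ∈ ((Finset.range (0 + 1) ×ˢ Finset.range (0 + 1) ×ˢ
          Finset.range (0 + 1) ×ˢ Finset.range (ℓ + 1) ×ˢ
          Finset.range (ℓ + 1)).filter
        (fun α => α.1 + 2 * α.2.1 + α.2.2.1 = 0 ∧
          α.2.2.1 + α.2.2.2.1 + 2 * α.2.2.2.2 = ℓ)),
      p ^ 2 * q₁ ^ α.1 * q₂ ^ α.2.1 * q₃ ^ α.2.2.1 *
          q₄ ^ α.2.2.2.1 * q₅ ^ α.2.2.2.2 /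
        ((α.1.factorial : ℝ) * (α.2.1.factorial : ℝ) * (α.2.2.1.factorial : ℝ) *
          (α.2.2.2.1.factorial : ℝ) * (α.2.2.2.2.factorial : ℝ)) =
    ∑ β ∈ (Finset.range (ℓ + 1) ×ˢ Finset.range (ℓ + 1)).filter
        (fun β => β.1 + 2 * β.2 = ℓ),
      p ^ 2 * q₄ ^ β.1 * q₅ ^ β.2 /
        ((β.1.factorial : ℝ) * (β.2.factorial : ℝ)) := by
  refine Finset.sum_nbij' (fun α => (α.2.2.2.1, α.2.2.2.2))
    (fun β => (0, 0, 0, β.1, β.2)) ?_ ?_ ?_ ?_ ?_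
  · rintro ⟨a, b, c, d, e⟩ h
    simp only [Finset.mem_filter, Finset.mem_product, Finset.mem_range] at h ⊢
    omega
  · rintro ⟨d, e⟩ h
    simp only [Finset.mem_filter, Finset.mem_product, Finset.mem_range] at h ⊢
    exact ⟨⟨by omega, by omega, by omega, h.1.1, h.1.2⟩, trivial, by omega⟩
  · rintro ⟨a, b, c, d, e⟩ h
    simp only [Finset.mem_filter, Finset.mem_product, Finset.mem_range] at h
    have : a = 0 ∧ b = 0 ∧ c = 0 := by omega
    simp [this.1, this.2.1, this.2.2]
  · rintro ⟨d, e⟩ h; rfl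
  · rintro ⟨a, b, c, d, e⟩ h
    simp only [Finset.mem_filter, Finset.mem_product, Finset.mem_range] at h
    have : a = 0 ∧ b = 0 ∧ c = 0 := by omega
    simp [this.1, this.2.1, this.2.2, Nat.factorial]

lemma big_iff_small (M R : ℕ) : BigSysSolvable M R ↔ SmallSysSolvable M R := by
  constructor
  · rintro ⟨p, q₁, q₂, q₃, q₄, q₅, hp, hq4, heq⟩
    refine ⟨p, q₄, q₅, hp, hq4, fun ℓ hℓ => ?_⟩
    simp only [Finset.mem_Icc] at hℓ
    have h := heq 0 ℓ (by omega) (by omega)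
    simp only [big_zero_sum] at h
    exact h
  · rintro ⟨p, q₄, q₅, hp, hq4, heq⟩
    refine ⟨p, 0, 0, 0, q₄, q₅, hp, hq4, fun ℓ₁ ℓ₂ h1 h2 => ?_⟩
    rcases Nat.eq_zero_or_pos ℓ₁ with h0 | hpos
    · subst h0
      simp only [Pi.zero_apply, big_zero_sum]
      exact heq ℓ₂ (Finset.mem_Icc.mpr ⟨by omega, by omega⟩)
    · refine Finset.sum_eq_zero fun m _ => Finset.sum_eq_zero ?_
      rintro ⟨a, b, c, d, e⟩ h
      simp only [Finset.mem_filter, Finset.mem_product, Finset.mem_range] at h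
      have h1 : a ≠ 0 ∨ b ≠ 0 ∨ c ≠ 0 := by omega
      rcases h1 with h | h | h <;> simp [zero_pow h]

/-- `r̄(M) = r(M)`: the minimal degree of unsolvability of the big system
equals that of the small system, for every `M ≥ 2`. -/
theorem rbar_eq_r (M : ℕ) (hM : 2 ≤ M) :
    sInf {R : ℕ | ¬ BigSysSolvable M R} = sInf {R : ℕ | ¬ SmallSysSolvable M R} := by
  congr 1
  ext R
  simp only [Set.mem_setOf_eq, big_iff_small]
end
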